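/- arXiv:1211.6359 — 4 statements merged into one kernel-verified Lean document; each statement's English description precedes it below -/
import Mathlib

section
/- Every permutation π of [n], written as a word π(1)π(2)···π(n), admits a unique factorization p τ₁ τ₂ ··· τ_r (as a concatenation of consecutive factors) where p is an increasing word (possibly empty) and each τ_i is a hook. -/
namespace QEuler

/-- inversion number of a word -/
def invL : List ℕ → ℕ
  | [] => 0
  | a :: l => l.countP (fun b => decide (b < a)) + invL l

/-- descent set positions (1-indexed) of a word -/
def descSet (w : List ℕ) : List ℕ :=
  (List.range (w.length - 1)).filter (fun i => decide (w.getD (i+1) 0 < w.getD i 0))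

def desL (w : List ℕ) : ℕ := (descSet w).length

def majL (w : List ℕ) : ℕ := ((descSet w).map (· + 1)).sum

def IncreasingL (w : List ℕ) : Prop := w.Chain' (· < ·)

def IsHook (w : List ℕ) : Prop :=
  2 ≤ w.length ∧ w.getD 1 0 < w.getD 0 0 ∧ w.tail.Chain' (· < ·)

def lastDesc (w : List ℕ) : Option ℕ := (descSet w).max?

/-- hook factorization: increasing prefix and list of hooks -/
def hookAux : ℕ → List ℕ → List ℕ × List (List ℕ)
  | 0, w => (w, [])
  | fuel+1, w =>
    match lastDesc w with
    | none => (w, [])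
    | some i =>
      let r := hookAux fuel (w.take i)
      (r.1, r.2 ++ [w.drop i])

def hookFact (w : List ℕ) : List ℕ × List (List ℕ) := hookAux w.length w

def pixL (w : List ℕ) : ℕ := (hookFact w).1.length

def lecL (w : List ℕ) : ℕ := ((hookFact w).2.map invL).sum

/-- rightmost index of the maximum letter -/
def rmax (w : List ℕ) : ℕ := (w.length - 1) - (w.reverse.idxOf (w.foldr max 0))

def rixAux : ℕ → List ℕ → ℕ
  | 0, _ => 0
  | fuel+1, w =>
    if w = [] then 0
    else
      let i := rmax w
      if i + 1 = w.length then 1 + rixAux fuel (w.take (w.length - 1))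
      else if i = 0 then 0
      else rixAux fuel (w.drop (i+1))

def rixL (w : List ℕ) : ℕ := rixAux w.length w

/-- admissible inversions of a word (0-indexed pairs) -/
def aiL (w : List ℕ) : ℕ :=
  ((Finset.range w.length ×ˢ Finset.range w.length).filter
    (fun p => p.1 < p.2 ∧ w.getD p.2 0 < w.getD p.1 0 ∧
      ((0 < p.1 ∧ w.getD (p.1 - 1) 0 < w.getD p.1 0) ∨
        ∃ l ∈ Finset.Ioo p.1 p.2, w.getD p.1 0 < w.getD l 0))).card

/-- the word π(1)π(2)⋯π(n) of a permutation, with letters in {1,…,n} -/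
def word {n : ℕ} (π : Equiv.Perm (Fin n)) : List ℕ := List.ofFn (fun i => (π i : ℕ) + 1)

def des {n : ℕ} (π : Equiv.Perm (Fin n)) : ℕ := desL (word π)
def maj {n : ℕ} (π : Equiv.Perm (Fin n)) : ℕ := majL (word π)
def inv {n : ℕ} (π : Equiv.Perm (Fin n)) : ℕ := invL (word π)
def lec {n : ℕ} (π : Equiv.Perm (Fin n)) : ℕ := lecL (word π)
def pix {n : ℕ} (π : Equiv.Perm (Fin n)) : ℕ := pixL (word π)
def rix {n : ℕ} (π : Equiv.Perm (Fin n)) : ℕ := rixL (word π)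
def ai  {n : ℕ} (π : Equiv.Perm (Fin n)) : ℕ := aiL (word π)

def exc {n : ℕ} (π : Equiv.Perm (Fin n)) : ℕ :=
  (Finset.univ.filter (fun i : Fin n => (i : ℕ) < (π i : ℕ))).card

def fixp {n : ℕ} (π : Equiv.Perm (Fin n)) : ℕ :=
  (Finset.univ.filter (fun i : Fin n => π i = i)).card

/-- (q;q)_n -/
noncomputable def qq (n : ℕ) : Polynomial ℚ :=
  ∏ i ∈ Finset.range n, (1 - Polynomial.X ^ (i+1))

/-- the q-binomial coefficient -/
noncomputable def qbinom (n k : ℕ) : Polynomial ℚ :=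
  if k ≤ n then qq n / (qq (n-k) * qq k) else 0


instance : DecidablePred IncreasingL :=
  fun w => inferInstanceAs (Decidable (w.IsChain (· < ·)))

/-- `(maj−exc,exc)` q-Eulerian numbers `A_{n,k}(q)` -/
noncomputable def Amaj (n k : ℕ) : Polynomial ℚ :=
  ∑ π ∈ Finset.univ.filter (fun π : Equiv.Perm (Fin n) => exc π = k),
    Polynomial.X ^ (maj π - exc π)

/-- fixed point q-Eulerian numbers `A_{n,k}^{(j)}(q)` via `(maj−exc,exc,fix)` -/
noncomputable def Amajfix (n k j : ℕ) : Polynomial ℚ :=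
  ∑ π ∈ Finset.univ.filter (fun π : Equiv.Perm (Fin n) => exc π = k ∧ fixp π = j),
    Polynomial.X ^ (maj π - exc π)

/-- q-Eulerian numbers via `(inv−lec,lec)` -/
noncomputable def Alec (n k : ℕ) : Polynomial ℚ :=
  ∑ π ∈ Finset.univ.filter (fun π : Equiv.Perm (Fin n) => lec π = k),
    Polynomial.X ^ (inv π - lec π)

/-- fixed point q-Eulerian numbers via `(inv−lec,lec,pix)` -/
noncomputable def Alecpix (n k j : ℕ) : Polynomial ℚ :=
  ∑ π ∈ Finset.univ.filter (fun π : Equiv.Perm (Fin n) => lec π = k ∧ pix π = j),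
    Polynomial.X ^ (inv π - lec π)

/-! The last hook of a factorization of `w` is forced: two hooks ending `w` coincide, since the
shorter one would be a proper suffix of the longer, hence lie in its increasing tail. Removing it
and inducting on the prefix gives uniqueness for every word. For existence, a word that has no two
equal adjacent letters and is not increasing ends with a hook, the suffix starting at its last
descent. -/

lemma IsHook.not_increasing {τ : List ℕ} (hτ : IsHook τ) : ¬ IncreasingL τ := by
  obtain ⟨hlen, hdesc, -⟩ := hτ
  match τ, hlen with
  | a :: b :: t, _ =>
    simp only [List.getD_cons_zero, List.getD_cons_succ] at hdesc
    intro h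
    exact (lt_asymm hdesc) (List.isChain_cons_cons.mp h).1

lemma IsHook.eq_nil_of_append {as τ : List ℕ} (h : IsHook (as ++ τ)) (hτ : IsHook τ) :
    as = [] := by
  obtain _ | ⟨a, as⟩ := as
  · rfl
  · have htail : IncreasingL (as ++ τ) := h.2.2
    exact absurd (htail.suffix (List.suffix_append as τ)) hτ.not_increasing

lemma IsHook.append_inj {u u' τ τ' : List ℕ} (hτ : IsHook τ) (hτ' : IsHook τ')
    (h : u ++ τ = u' ++ τ') : u = u' ∧ τ = τ' := by
  rcases List.append_eq_append_iff.mp h with ⟨as, rfl, rfl⟩ | ⟨bs, rfl, rfl⟩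
  · obtain rfl := hτ.eq_nil_of_append hτ'
    simp
  · obtain rfl := hτ'.eq_nil_of_append hτ
    simp

lemma exists_append_isHook {w : List ℕ} (hw : w.IsChain (· ≠ ·)) (hinc : ¬ IncreasingL w) :
    ∃ u τ, IsHook τ ∧ u ++ τ = w := by
  induction w with
  | nil => exact absurd List.IsChain.nil hinc
  | cons a w ih =>
    by_cases hw' : IncreasingL w
    · obtain _ | ⟨b, t⟩ := w
      · exact absurd (List.isChain_singleton a) hinc
      · have hba : b < a := by
          have hab : a ≠ b := (List.isChain_cons_cons.mp hw).1
          have hnab : ¬ a < b := fun hab => hinc (List.isChain_cons_cons.mpr ⟨hab, hw'⟩)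
          omega
        exact ⟨[], a :: b :: t, ⟨by simp, hba, hw'⟩, rfl⟩
    · obtain ⟨u, τ, hτ, rfl⟩ := ih hw.tail hw'
      exact ⟨a :: u, τ, hτ, rfl⟩

def IsHookFactorization (w : List ℕ) (pt : List ℕ × List (List ℕ)) : Prop :=
  IncreasingL pt.1 ∧ (∀ τ ∈ pt.2, IsHook τ) ∧ pt.1 ++ pt.2.flatten = w

lemma IsHookFactorization.eq_of_increasing {w : List ℕ} {pt : List ℕ × List (List ℕ)}
    (h : IsHookFactorization w pt) (hw : IncreasingL w) : pt = (w, []) := by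
  obtain ⟨p, _ | ⟨τ, ts⟩⟩ := pt
  · obtain ⟨-, -, rfl⟩ := h
    simp
  · obtain ⟨-, hts, rfl⟩ := h
    have hinfix : τ <:+: p ++ (τ :: ts).flatten := by
      simpa [← List.append_assoc] using List.infix_append p τ ts.flatten
    exact absurd (hw.infix hinfix) (hts τ (by simp)).not_increasing

lemma IsHookFactorization.snoc {w τ : List ℕ} {p : List ℕ} {ts : List (List ℕ)}
    (h : IsHookFactorization w (p, ts)) (hτ : IsHook τ) :
    IsHookFactorization (w ++ τ) (p, ts ++ [τ]) := by
  obtain ⟨hp, hts, rfl⟩ := h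
  refine ⟨hp, ?_, by simp⟩
  simpa [or_imp, forall_and] using ⟨hts, hτ⟩

lemma IsHookFactorization.of_snoc {w τ : List ℕ} {p : List ℕ} {ts : List (List ℕ)}
    (h : IsHookFactorization w (p, ts ++ [τ])) :
    IsHook τ ∧ IsHookFactorization (p ++ ts.flatten) (p, ts) := by
  obtain ⟨hp, hts, -⟩ := h
  exact ⟨hts τ (by simp), hp, fun σ hσ => hts σ (by simp [hσ]), rfl⟩

lemma IsHookFactorization.unique {w : List ℕ} {pt pt' : List ℕ × List (List ℕ)}
    (h : IsHookFactorization w pt) (h' : IsHookFactorization w pt') : pt = pt' := by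
  obtain ⟨p, ts⟩ := pt
  induction ts using List.reverseRecOn generalizing w pt' with
  | nil =>
    obtain ⟨hp, -, rfl⟩ := h
    rw [h'.eq_of_increasing (by simpa using hp)]
    simp
  | append_singleton ts τ ih =>
    obtain ⟨p', ts'⟩ := pt'
    rcases List.eq_nil_or_concat ts' with rfl | ⟨ts', τ', rfl⟩
    · have hw : IncreasingL w := by simpa [← h'.2.2] using h'.1
      simpa using h.eq_of_increasing hw
    · rw [List.concat_eq_append] at h' ⊢
      obtain ⟨hτ, hpre⟩ := h.of_snoc
      obtain ⟨hτ', hpre'⟩ := h'.of_snoc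
      have hw : (p ++ ts.flatten) ++ τ = (p' ++ ts'.flatten) ++ τ' := by
        simpa using h.2.2.trans h'.2.2.symm
      obtain ⟨hu, rfl⟩ := hτ.append_inj hτ' hw
      cases ih (hu ▸ hpre') hpre
      rfl

lemma exists_isHookFactorization (w : List ℕ) (hw : w.IsChain (· ≠ ·)) :
    ∃ pt, IsHookFactorization w pt := by
  by_cases hinc : IncreasingL w
  · exact ⟨(w, []), hinc, by simp, by simp⟩
  · obtain ⟨u, τ, hτ, rfl⟩ := exists_append_isHook hw hinc
    have hshorter : u.length < (u ++ τ).length := by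
      have := hτ.1
      simp only [List.length_append]
      omega
    obtain ⟨⟨p, ts⟩, hu⟩ := exists_isHookFactorization u hw.left_of_append
    exact ⟨_, hu.snoc hτ⟩
termination_by w.length

lemma word_nodup {n : ℕ} (π : Equiv.Perm (Fin n)) : (word π).Nodup :=
  List.nodup_ofFn.mpr fun i j hij => π.injective (Fin.ext (by simpa using hij))

/-- Every permutation word admits a unique hook factorization: an increasing word
followed by a sequence of hooks. -/
theorem hook_factorization_exists_unique (n : ℕ) (π : Equiv.Perm (Fin n)) :
    ∃! pt : List ℕ × List (List ℕ),
      IncreasingL pt.1 ∧ (∀ τ ∈ pt.2, IsHook τ) ∧ pt.1 ++ pt.2.flatten = word π := by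
  obtain ⟨pt, hpt⟩ := exists_isHookFactorization (word π) (word_nodup π).isChain
  exact ⟨pt, hpt, fun pt' hpt' => IsHookFactorization.unique hpt' hpt⟩

end QEuler
end

section
/- For any hook τ with m distinct letters and inv(τ) = k inversions, there exists a unique hook τ' with the same set of letters as τ such that inv(τ') = m − k. -/
namespace List

variable {α : Type*} [LinearOrder α] {l : List α}

theorem strictMonoOn_countP_lt : StrictMonoOn (fun x => l.countP (· < x)) {x | x ∈ l} := by
  intro x hx y _ hxy
  have hsub : l.filter (· < x) <+ l.filter (· < y) :=
    l.monotone_filter_right fun a ha => by simpa using (by simpa using ha : a < x).trans hxy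
  have hne : l.filter (· < x) ≠ l.filter (· < y) := fun h => by
    have hmem : x ∈ l.filter (· < y) := by simpa [hxy] using hx
    simp [← h] at hmem
  simp only [countP_eq_length_filter]
  exact lt_of_le_of_ne hsub.length_le (mt hsub.eq_of_length hne)

theorem SortedLT.countP_lt_getElem (hl : l.SortedLT) (i : ℕ) (hi : i < l.length) :
    l.countP (· < l[i]) = i := by
  have htake : (l.take i).countP (· < l[i]) = i := by
    rw [countP_eq_length.mpr, length_take_of_le hi.le]
    intro a ha
    obtain ⟨j, hj, rfl⟩ := mem_take_iff_getElem.mp ha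
    simpa using hl.getElem_lt_getElem_iff.mpr (lt_min_iff.mp hj).1
  have hdrop : (l.drop i).countP (· < l[i]) = 0 := by
    refine countP_eq_zero.mpr fun a ha => ?_
    obtain ⟨j, hj, rfl⟩ := mem_drop_iff_getElem.mp ha
    simpa using hl.getElem_le_getElem_iff.mpr (Nat.le_add_right i j)
  calc l.countP (· < l[i]) = (l.take i ++ l.drop i).countP (· < l[i]) := by
        rw [take_append_drop]
    _ = i := by rw [countP_append, htake, hdrop, Nat.add_zero]

end List

namespace QEuler

open List

theorem invL_eq_zero_of_sortedLT {l : List ℕ} (hl : l.SortedLT) : invL l = 0 := by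
  induction l with
  | nil => rfl
  | cons a t ih =>
    obtain ⟨ha, ht⟩ := pairwise_cons.mp hl.pairwise
    rw [invL, ih ht.sortedLT, countP_eq_zero.mpr fun b hb => by simpa using (ha b hb).le]

theorem invL_cons_of_sortedLT {a : ℕ} {t : List ℕ} (ht : t.SortedLT) :
    invL (a :: t) = t.countP (· < a) := by
  rw [invL, invL_eq_zero_of_sortedLT ht, Nat.add_zero]

theorem invL_cons_of_perm {a : ℕ} {t l : List ℕ} (ht : t.SortedLT) (hl : (a :: t) ~ l) :
    invL (a :: t) = l.countP (· < a) := by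
  rw [invL_cons_of_sortedLT ht, ← hl.countP_eq, countP_cons]
  simp

theorem isHook_cons_iff {a : ℕ} {t : List ℕ} :
    IsHook (a :: t) ↔ t.SortedLT ∧ 0 < invL (a :: t) := by
  cases t with
  | nil => simp [IsHook, invL]
  | cons b t =>
    have hhook : IsHook (a :: b :: t) ↔ (b :: t).SortedLT ∧ b < a := by
      rw [sortedLT_iff_isChain]
      exact ⟨fun h => ⟨h.2.2, h.2.1⟩, fun h => ⟨by simp, h.2, h.1⟩⟩
    rw [hhook]
    refine and_congr_right fun ht => ?_
    rw [invL_cons_of_sortedLT ht, countP_pos_iff]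
    refine ⟨fun hba => ⟨b, mem_cons_self, by simpa using hba⟩, fun ⟨c, hc, hca⟩ => ?_⟩
    rcases mem_cons.mp hc with rfl | hc
    · simpa using hca
    · exact ((pairwise_cons.mp ht.pairwise).1 c hc).trans (by simpa using hca)

theorem IsHook.ne_nil {w : List ℕ} (hw : IsHook w) : w ≠ [] := by
  rintro rfl
  exact absurd hw.1 (by decide)

theorem IsHook.invL_pos {w : List ℕ} (hw : IsHook w) : 0 < invL w := by
  obtain ⟨a, t, rfl⟩ := exists_cons_of_ne_nil hw.ne_nil
  exact (isHook_cons_iff.mp hw).2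

theorem IsHook.invL_lt_length {w : List ℕ} (hw : IsHook w) : invL w < w.length := by
  obtain ⟨a, t, rfl⟩ := exists_cons_of_ne_nil hw.ne_nil
  rw [invL_cons_of_sortedLT (isHook_cons_iff.mp hw).1, length_cons]
  exact Nat.lt_succ_of_le countP_le_length

theorem IsHook.eq_of_perm_of_invL_eq {σ σ' : List ℕ} (hσ : IsHook σ) (hσ' : IsHook σ')
    (hperm : σ ~ σ') (hinv : invL σ = invL σ') : σ = σ' := by
  obtain ⟨a, s, rfl⟩ := exists_cons_of_ne_nil hσ.ne_nil
  obtain ⟨b, s', rfl⟩ := exists_cons_of_ne_nil hσ'.ne_nil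
  have hs := (isHook_cons_iff.mp hσ).1
  have hs' := (isHook_cons_iff.mp hσ').1
  have hab : a = b := by
    refine strictMonoOn_countP_lt.injOn mem_cons_self (hperm.symm.subset mem_cons_self) ?_
    rw [← invL_cons_of_perm hs (.refl _), hinv, invL_cons_of_perm hs' hperm.symm]
  subst hab
  rw [((perm_cons a).mp hperm).eq_of_sortedLE hs.sortedLE hs'.sortedLE]

theorem exists_isHook_perm_invL_eq {l : List ℕ} (hl : l.Nodup) {i : ℕ} (hi0 : 0 < i)
    (hil : i < l.length) : ∃ σ, σ ~ l ∧ IsHook σ ∧ invL σ = i := by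
  set L := l.insertionSort (· ≤ ·)
  have hLl : L ~ l := perm_insertionSort _ l
  have hL : L.SortedLT := sortedLE_insertionSort.sortedLT_of_nodup (hLl.nodup_iff.mpr hl)
  have hiL : i < L.length := hLl.length_eq ▸ hil
  have hsorted : (L.eraseIdx i).SortedLT := (hL.pairwise.sublist (eraseIdx_sublist _ _)).sortedLT
  have hinv : invL (L[i] :: L.eraseIdx i) = i := by
    rw [invL_cons_of_perm hsorted (getElem_cons_eraseIdx_perm hiL), hL.countP_lt_getElem]
  exact ⟨_, (getElem_cons_eraseIdx_perm hiL).trans hLl,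
    isHook_cons_iff.mpr ⟨hsorted, hinv.symm ▸ hi0⟩, hinv⟩

/-- For a hook `τ` with `m` distinct letters and `k` inversions there is a unique hook
with the same letters and `m - k` inversions. -/
theorem hook_complement_exists_unique (τ : List ℕ) (m k : ℕ)
    (hhook : IsHook τ) (hnd : τ.Nodup) (hm : τ.length = m) (hk : invL τ = k) :
    ∃! τ' : List ℕ, τ'.Perm τ ∧ IsHook τ' ∧ invL τ' = m - k := by
  have hk0 : 0 < k := hk ▸ hhook.invL_pos
  have hkm : k < m := hk ▸ hm ▸ hhook.invL_lt_length
  obtain ⟨σ, hσ, hσhook, hσinv⟩ :=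
    exists_isHook_perm_invL_eq hnd (i := m - k) (by omega) (by omega)
  refine ⟨σ, ⟨hσ, hσhook, hσinv⟩, fun ρ ⟨hρ, hρhook, hρinv⟩ => ?_⟩
  exact hρhook.eq_of_perm_of_invL_eq hσhook (hρ.trans hσ.symm) (hρinv.trans hσinv.symm)

end QEuler
end

section
/- There is an involution v ↦ u on the set of permutations of [n] with pix = j such that lec(u) = n − j − lec(v) and inv(u) − lec(u) = inv(v) − lec(v). -/
namespace QEuler

/-!
Let `w = p τ₁ ⋯ τ_r` be the hook factorization. A hook with `k` letters is determined by its
letter set and its inversion number `m ∈ [1, k - 1]`: its first letter is the `(m + 1)`-st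
smallest letter. Replacing every `τ_i` by the hook on the same letters with `|τ_i| - inv τ_i`
inversions is an involution, and the new word factors as `p τ₁' ⋯ τ_r'` because a hook has a
single descent, at its start, so the factorization is read off from the last descents. Hence `pix`
is kept and `lec` becomes `∑ (|τ_i| - inv τ_i) = n - pix - lec`, while `inv - lec` counts only
inversions between different factors (`p` is increasing), which depend on their letter sets alone.
-/

theorem invL_eq_zero_of_pairwise {l : List ℕ} (h : l.Pairwise (· ≤ ·)) : invL l = 0 := by
  induction l with
  | nil => rfl
  | cons a l ih =>
    rw [List.pairwise_cons] at h
    simp only [invL, ih h.2, add_zero, List.countP_eq_zero, decide_eq_true_eq, not_lt]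
    exact h.1

theorem invL_append (x y : List ℕ) :
    invL (x ++ y) = invL x + invL y + (x.map fun a => y.countP (· < a)).sum := by
  induction x with
  | nil => simp [invL]
  | cons a x ih =>
    simp only [List.cons_append, invL, List.countP_append, ih, List.map_cons, List.sum_cons]
    omega

theorem invL_flatten_add_sum_eq_of_forall₂_perm {bs bs' : List (List ℕ)}
    (h : List.Forall₂ List.Perm bs bs') :
    invL bs.flatten + (bs'.map invL).sum = invL bs'.flatten + (bs.map invL).sum := by
  induction h with
  | nil => rfl
  | @cons b b' bs bs' hb hbs ih =>
    have hcross : (b.map fun a => bs.flatten.countP (· < a)).sum =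
        (b'.map fun a => bs'.flatten.countP (· < a)).sum := by
      rw [← (hb.map _).sum_eq]
      exact congrArg List.sum
        (List.map_congr_left fun a _ => (List.Perm.flatten_congr hbs).countP_eq _)
    simp only [List.flatten_cons, List.map_cons, List.sum_cons, invL_append]
    omega

theorem invL_getElem_cons_eraseIdx {L : List ℕ} (hL : L.Pairwise (· < ·)) {m : ℕ}
    (hm : m < L.length) : invL (L[m] :: L.eraseIdx m) = m := by
  have hsplit : L = L.take m ++ L[m] :: L.drop (m + 1) := by
    rw [← List.drop_eq_getElem_cons, List.take_append_drop]
  have hpw := hL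
  rw [hsplit, List.pairwise_append, List.pairwise_cons] at hpw
  rw [invL, invL_eq_zero_of_pairwise ((hL.sublist (List.eraseIdx_sublist _ _)).imp le_of_lt),
    List.eraseIdx_eq_take_drop_succ, List.countP_append,
    List.countP_eq_length.2 fun x hx => by simpa using hpw.2.2 x hx _ List.mem_cons_self,
    List.countP_eq_zero.2 fun x hx => by simpa using (hpw.2.1.1 x hx).le]
  simp [hm.le]

theorem countP_lt_lt_countP_lt {l : List ℕ} {a b : ℕ} (hab : a < b) (ha : a ∈ l) :
    l.countP (· < a) < l.countP (· < b) := by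
  simp only [List.countP_eq_length_filter]
  have hsub := List.monotone_filter_right l (p := (· < a)) (q := (· < b))
    fun x hx => by simp only [decide_eq_true_eq] at hx ⊢; omega
  refine lt_of_le_of_ne hsub.length_le fun hlen => ?_
  have : a ∈ l.filter (· < a) := hsub.eq_of_length hlen ▸ List.mem_filter.2 ⟨ha, by simpa⟩
  simp at this

theorem eq_of_perm_of_invL_eq {s t : List ℕ} (hs : s.tail.Pairwise (· < ·))
    (ht : t.tail.Pairwise (· < ·)) (hp : s.Perm t) (hinv : invL s = invL t) : s = t := by
  rcases s with _ | ⟨a, u⟩ <;> rcases t with _ | ⟨b, v⟩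
  · rfl
  · exact absurd hp.length_eq (by simp)
  · exact absurd hp.length_eq (by simp)
  -- `invL (c :: w)` is the rank of `c` among the letters, so it pins down the first letter.
  have key : ∀ c w, w.Pairwise (· < ·) → invL (c :: w) = (c :: w).countP (· < c) := by
    intro c w hw
    simp [invL, invL_eq_zero_of_pairwise (hw.imp le_of_lt)]
  have hcount : (b :: v).countP (· < a) = (b :: v).countP (· < b) := by
    rw [← hp.countP_eq, ← key a u hs, ← key b v ht, hinv]
  have hab : a = b := by
    have ha : a ∈ b :: v := hp.subset List.mem_cons_self
    rcases lt_trichotomy a b with h | h | h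
    · exact absurd hcount (countP_lt_lt_countP_lt h ha).ne
    · exact h
    · exact absurd hcount (countP_lt_lt_countP_lt h List.mem_cons_self).ne'
  subst hab
  exact congrArg (a :: ·) (((List.perm_cons a).1 hp).eq_of_pairwise' hs ht)

def hookOf (L : List ℕ) (m : ℕ) : List ℕ := L.getD m 0 :: L.eraseIdx m

section hookOf

variable {L : List ℕ} {m : ℕ}

theorem perm_hookOf (hm : m < L.length) : (hookOf L m).Perm L := by
  rw [hookOf, List.getD_eq_getElem _ _ hm]
  exact List.getElem_cons_eraseIdx_perm hm

theorem invL_hookOf (hL : L.Pairwise (· < ·)) (hm : m < L.length) : invL (hookOf L m) = m := by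
  rw [hookOf, List.getD_eq_getElem _ _ hm, invL_getElem_cons_eraseIdx hL hm]

theorem pairwise_tail_hookOf (hL : L.Pairwise (· < ·)) : (hookOf L m).tail.Pairwise (· < ·) :=
  hL.sublist (List.eraseIdx_sublist _ _)

theorem isHook_hookOf (hL : L.Pairwise (· < ·)) (hm : m < L.length) (hm1 : 1 ≤ m) :
    IsHook (hookOf L m) := by
  refine ⟨by simp [hookOf, List.length_eraseIdx_of_lt hm]; omega, ?_,
    List.isChain_iff_pairwise.2 (pairwise_tail_hookOf hL)⟩
  obtain ⟨L0, L, rfl⟩ := List.exists_cons_of_length_pos (by omega : 0 < L.length)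
  obtain ⟨m, rfl⟩ := Nat.exists_eq_add_of_le' hm1
  simp only [hookOf, List.eraseIdx_cons_succ, List.getD_cons_succ, List.getD_cons_zero]
  rw [List.getD_eq_getElem _ _ (by simpa using hm)]
  exact List.rel_of_pairwise_cons hL (List.getElem_mem _)

end hookOf

theorem one_le_invL_and_invL_lt_length {t : List ℕ} (ht : IsHook t) :
    1 ≤ invL t ∧ invL t < t.length := by
  obtain ⟨hlen, hdesc, hchain⟩ := ht
  rcases t with _ | ⟨a, _ | ⟨b, v⟩⟩
  · simp at hlen
  · simp at hlen
  simp only [List.getD_cons_succ, List.getD_cons_zero, List.tail_cons] at hdesc hchain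
  rw [invL, invL_eq_zero_of_pairwise ((List.isChain_iff_pairwise.1 hchain).imp le_of_lt),
    add_zero, List.length_cons]
  exact ⟨List.countP_pos_iff.2 ⟨b, List.mem_cons_self, by simpa⟩,
    Nat.lt_succ_of_le List.countP_le_length⟩

def hookFlip (t : List ℕ) : List ℕ := hookOf (t.mergeSort (· ≤ ·)) (t.length - invL t)

section hookFlip

variable {t : List ℕ}

theorem pairwise_mergeSort_of_nodup (ht : t.Nodup) : (t.mergeSort (· ≤ ·)).Pairwise (· < ·) :=
  ((List.pairwise_mergeSort' (· ≤ ·) t).and ((List.mergeSort_perm t _).nodup_iff.2 ht)).imp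
    fun h => lt_of_le_of_ne h.1 h.2

theorem perm_hookFlip (ht : IsHook t) : (hookFlip t).Perm t := by
  have := one_le_invL_and_invL_lt_length ht
  exact (perm_hookOf (by rw [List.length_mergeSort]; omega)).trans (List.mergeSort_perm t _)

theorem invL_hookFlip (ht : IsHook t) (hnd : t.Nodup) :
    invL (hookFlip t) = t.length - invL t := by
  have := one_le_invL_and_invL_lt_length ht
  exact invL_hookOf (pairwise_mergeSort_of_nodup hnd) (by rw [List.length_mergeSort]; omega)

theorem isHook_hookFlip (ht : IsHook t) (hnd : t.Nodup) : IsHook (hookFlip t) := by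
  have := one_le_invL_and_invL_lt_length ht
  exact isHook_hookOf (pairwise_mergeSort_of_nodup hnd) (by rw [List.length_mergeSort]; omega)
    (by omega)

theorem hookFlip_hookFlip (ht : IsHook t) (hnd : t.Nodup) : hookFlip (hookFlip t) = t := by
  have hp := perm_hookFlip ht
  have ht' := isHook_hookFlip ht hnd
  have hnd' := hp.nodup_iff.2 hnd
  have hrange := one_le_invL_and_invL_lt_length ht
  refine eq_of_perm_of_invL_eq (pairwise_tail_hookOf (pairwise_mergeSort_of_nodup hnd'))
    (List.isChain_iff_pairwise.1 ht.2.2) ((perm_hookFlip ht').trans hp) ?_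
  rw [invL_hookFlip ht' hnd', invL_hookFlip ht hnd, hp.length_eq]
  omega

end hookFlip

theorem mem_descSet {w : List ℕ} {i : ℕ} :
    i ∈ descSet w ↔ ∃ h : i + 1 < w.length, w[i + 1] < w[i] := by
  simp only [descSet, List.mem_filter, List.mem_range, decide_eq_true_eq]
  constructor
  · rintro ⟨hi, hlt⟩
    refine ⟨by omega, ?_⟩
    rwa [List.getD_eq_getElem _ _ (by omega), List.getD_eq_getElem _ _ (by omega)] at hlt
  · rintro ⟨hi, hlt⟩
    refine ⟨by omega, ?_⟩
    rwa [List.getD_eq_getElem _ _ hi, List.getD_eq_getElem _ _ (by omega)]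

theorem mem_descSet_drop {w : List ℕ} {i k : ℕ} :
    i ∈ descSet (w.drop k) ↔ i + k ∈ descSet w := by
  simp only [mem_descSet, List.length_drop, List.getElem_drop]
  constructor <;> rintro ⟨hi, hlt⟩ <;> exact ⟨by omega, by convert hlt using 2 <;> omega⟩

theorem descSet_eq_nil_of_isChain {w : List ℕ} (hw : w.IsChain (· < ·)) : descSet w = [] :=
  List.eq_nil_iff_forall_not_mem.2 fun i hi => by
    obtain ⟨h, hlt⟩ := mem_descSet.1 hi
    exact (List.isChain_iff_getElem.1 hw i h).not_gt hlt

theorem isChain_of_descSet_eq_nil {w : List ℕ} (hw : w.Nodup) (h : descSet w = []) :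
    w.IsChain (· < ·) :=
  List.isChain_iff_getElem.2 fun i hi => by
    have hnot : i ∉ descSet w := h ▸ List.not_mem_nil
    rw [mem_descSet] at hnot
    have hne : w[i] ≠ w[i + 1] := fun he => by
      have := hw.getElem_inj_iff.1 he
      omega
    exact lt_of_le_of_ne (not_lt.1 fun hlt => hnot ⟨hi, hlt⟩) hne

theorem mem_descSet_of_isHook {t : List ℕ} (ht : IsHook t) {i : ℕ} :
    i ∈ descSet t ↔ i = 0 := by
  obtain ⟨hlen, hdesc, hchain⟩ := ht
  constructor
  · intro hi
    by_contra hne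
    have : i - 1 ∈ descSet (t.drop 1) :=
      mem_descSet_drop.2 (by rwa [Nat.sub_add_cancel (by omega)])
    rw [List.drop_one, descSet_eq_nil_of_isChain hchain] at this
    exact List.not_mem_nil this
  · rintro rfl
    rw [List.getD_eq_getElem _ _ (by omega), List.getD_eq_getElem _ _ (by omega)] at hdesc
    exact mem_descSet.2 ⟨hlen, hdesc⟩

theorem isHook_of_mem_descSet_iff {t : List ℕ} (hnd : t.Nodup)
    (h : ∀ i, i ∈ descSet t ↔ i = 0) : IsHook t := by
  obtain ⟨hlen, hdesc⟩ := mem_descSet.1 ((h 0).2 rfl)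
  refine ⟨hlen, by rwa [List.getD_eq_getElem _ _ hlen, List.getD_eq_getElem _ _ (by omega)], ?_⟩
  refine isChain_of_descSet_eq_nil ((List.tail_sublist t).nodup hnd)
    (List.eq_nil_iff_forall_not_mem.2 fun j hj => ?_)
  rw [← List.drop_one, mem_descSet_drop, h] at hj
  omega

theorem lastDesc_append_of_isHook (q : List ℕ) {t : List ℕ} (ht : IsHook t) :
    lastDesc (q ++ t) = some q.length := by
  have hdrop (j : ℕ) : j ∈ descSet t ↔ j + q.length ∈ descSet (q ++ t) := by
    rw [← mem_descSet_drop, List.drop_left]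
  refine List.max?_eq_some_iff.2 ⟨by simpa using (hdrop 0).1 ((mem_descSet_of_isHook ht).2 rfl),
    fun j hj => ?_⟩
  by_contra hlt
  have := (mem_descSet_of_isHook ht).1
    ((hdrop (j - q.length)).2 (by rwa [Nat.sub_add_cancel (by omega)]))
  omega

theorem isHook_drop_of_lastDesc_eq_some {w : List ℕ} (hw : w.Nodup) {i : ℕ}
    (h : lastDesc w = some i) : IsHook (w.drop i) := by
  obtain ⟨hi, hmax⟩ := List.max?_eq_some_iff.1 h
  refine isHook_of_mem_descSet_iff ((List.drop_sublist i w).nodup hw) fun j => ?_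
  rw [mem_descSet_drop]
  exact ⟨fun hj => by have := hmax _ hj; omega, by rintro rfl; simpa using hi⟩

theorem hookAux_spec {fuel : ℕ} {w : List ℕ} (hlen : w.length ≤ fuel) (hw : w.Nodup) :
    (hookAux fuel w).1 ++ (hookAux fuel w).2.flatten = w ∧
      (hookAux fuel w).1.IsChain (· < ·) ∧ ∀ t ∈ (hookAux fuel w).2, IsHook t := by
  induction fuel generalizing w with
  | zero =>
    rw [List.length_eq_zero_iff.1 (Nat.le_zero.1 hlen)]
    simp [hookAux]
  | succ fuel ih =>
    cases hlast : lastDesc w with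
    | none =>
      simp only [hookAux, hlast, List.flatten_nil, List.append_nil, List.not_mem_nil,
        IsEmpty.forall_iff, implies_true, and_true, true_and]
      exact isChain_of_descSet_eq_nil hw (List.max?_eq_none_iff.1 hlast)
    | some i =>
      have hi := (mem_descSet.1 (List.max?_eq_some_iff.1 hlast).1).1
      obtain ⟨happ, hinc, hhooks⟩ :=
        ih (w := w.take i) (by simp; omega) ((List.take_sublist i w).nodup hw)
      simp only [hookAux, hlast, List.flatten_append, List.flatten_cons, List.flatten_nil,
        List.append_nil, ← List.append_assoc, happ, List.take_append_drop, List.mem_append,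
        List.mem_singleton, true_and]
      exact ⟨hinc, fun t ht =>
        ht.elim (hhooks t) fun h => h ▸ isHook_drop_of_lastDesc_eq_some hw hlast⟩

theorem hookAux_append {p : List ℕ} {ts : List (List ℕ)} {fuel : ℕ} (hp : p.IsChain (· < ·))
    (hts : ∀ t ∈ ts, IsHook t) (hlen : (p ++ ts.flatten).length ≤ fuel) :
    hookAux fuel (p ++ ts.flatten) = (p, ts) := by
  induction ts using List.reverseRecOn generalizing fuel with
  | nil =>
    cases fuel <;> simp [hookAux, lastDesc, descSet_eq_nil_of_isChain hp]
  | append_singleton ts t ih =>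
    have ht := hts t (by simp)
    simp only [List.flatten_append, List.flatten_cons, List.flatten_nil, List.append_nil,
      ← List.append_assoc, List.length_append] at hlen ⊢
    have htlen : 2 ≤ t.length := ht.1
    obtain ⟨fuel, rfl⟩ : ∃ f, fuel = f + 1 := ⟨fuel - 1, by omega⟩
    simp only [hookAux, lastDesc_append_of_isHook _ ht, List.take_left, List.drop_left]
    rw [ih (fun t' ht' => hts t' (by simp [ht'])) (by rw [List.length_append]; omega)]

theorem hookFact_spec {w : List ℕ} (hw : w.Nodup) :
    (hookFact w).1 ++ (hookFact w).2.flatten = w ∧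
      (hookFact w).1.IsChain (· < ·) ∧ ∀ t ∈ (hookFact w).2, IsHook t :=
  hookAux_spec le_rfl hw

theorem hookFact_append {p : List ℕ} {ts : List (List ℕ)} (hp : p.IsChain (· < ·))
    (hts : ∀ t ∈ ts, IsHook t) : hookFact (p ++ ts.flatten) = (p, ts) :=
  hookAux_append hp hts le_rfl

def flipHooks (w : List ℕ) : List ℕ := (hookFact w).1 ++ ((hookFact w).2.map hookFlip).flatten

section flipHooks

variable {w : List ℕ}

theorem forall₂_perm_map_hookFlip (hw : w.Nodup) :
    List.Forall₂ List.Perm ((hookFact w).2.map hookFlip) (hookFact w).2 :=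
  List.forall₂_map_left_iff.2 <|
    List.forall₂_same.2 fun t ht => perm_hookFlip ((hookFact_spec hw).2.2 t ht)

theorem nodup_of_mem_hookFact_snd (hw : w.Nodup) {t : List ℕ} (ht : t ∈ (hookFact w).2) :
    t.Nodup := by
  refine ((List.sublist_flatten_of_mem ht).trans ?_).nodup hw
  conv_rhs => rw [← (hookFact_spec hw).1]
  exact List.sublist_append_right _ _

theorem hookFact_flipHooks (hw : w.Nodup) :
    hookFact (flipHooks w) = ((hookFact w).1, (hookFact w).2.map hookFlip) := by
  obtain ⟨-, hp, hts⟩ := hookFact_spec hw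
  refine hookFact_append hp fun t ht => ?_
  obtain ⟨s, hs, rfl⟩ := List.mem_map.1 ht
  exact isHook_hookFlip (hts s hs) (nodup_of_mem_hookFact_snd hw hs)

theorem perm_flipHooks (hw : w.Nodup) : (flipHooks w).Perm w := by
  conv_rhs => rw [← (hookFact_spec hw).1]
  exact (List.Perm.flatten_congr (forall₂_perm_map_hookFlip hw)).append_left _

theorem flipHooks_flipHooks (hw : w.Nodup) : flipHooks (flipHooks w) = w := by
  obtain ⟨happ, -, hts⟩ := hookFact_spec hw
  conv_rhs => rw [← happ]
  rw [flipHooks, hookFact_flipHooks hw, List.map_map]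
  congr 2
  refine (List.map_congr_left fun t ht => ?_).trans (List.map_id _)
  exact hookFlip_hookFlip (hts t ht) (nodup_of_mem_hookFact_snd hw ht)

theorem pixL_flipHooks (hw : w.Nodup) : pixL (flipHooks w) = pixL w := by
  rw [pixL, hookFact_flipHooks hw, pixL]

theorem lecL_add_lecL_flipHooks (hw : w.Nodup) :
    lecL w + lecL (flipHooks w) + pixL w = w.length := by
  obtain ⟨happ, -, hts⟩ := hookFact_spec hw
  have hsum : ((hookFact w).2.map fun t => invL t + invL (hookFlip t)) =
      (hookFact w).2.map List.length := List.map_congr_left fun t ht => by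
    have := one_le_invL_and_invL_lt_length (hts t ht)
    rw [invL_hookFlip (hts t ht) (nodup_of_mem_hookFact_snd hw ht)]
    omega
  conv_rhs => rw [← happ]
  rw [lecL, lecL, hookFact_flipHooks hw, pixL, List.map_map, ← List.sum_map_add,
    Function.comp_def, hsum, List.length_append, List.length_flatten]
  omega

theorem invL_flipHooks_add_lecL (hw : w.Nodup) :
    invL (flipHooks w) + lecL w = invL w + lecL (flipHooks w) := by
  obtain ⟨happ, hp, -⟩ := hookFact_spec hw
  have h := invL_flatten_add_sum_eq_of_forall₂_perm
    (.cons (List.Perm.refl (hookFact w).1) (forall₂_perm_map_hookFlip hw))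
  simp only [List.flatten_cons, List.map_cons, List.sum_cons, happ,
    invL_eq_zero_of_pairwise ((List.isChain_iff_pairwise.1 hp).imp le_of_lt)] at h
  rw [lecL, lecL, hookFact_flipHooks hw, flipHooks]
  simpa only [zero_add] using h

end flipHooks

section word

variable {n : ℕ}

theorem length_word (π : Equiv.Perm (Fin n)) : (word π).length = n := by
  simp [word]

theorem nodup_word (π : Equiv.Perm (Fin n)) : (word π).Nodup :=
  List.nodup_ofFn.2 fun _ _ h => π.injective (Fin.val_injective (Nat.add_right_cancel h))

theorem mem_word {π : Equiv.Perm (Fin n)} {x : ℕ} (hx : x ∈ word π) :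
    1 ≤ x ∧ x ≤ n := by
  obtain ⟨i, rfl⟩ := List.mem_ofFn.1 hx
  exact ⟨Nat.le_add_left 1 _, (π i).isLt⟩

theorem word_injective : Function.Injective (word (n := n)) := fun _ _ h =>
  Equiv.ext fun i => Fin.val_injective <| Nat.add_right_cancel (congrFun (List.ofFn_injective h) i)

theorem exists_word_eq_of_perm {π : Equiv.Perm (Fin n)} {w : List ℕ} (hw : w.Perm (word π)) :
    ∃ σ : Equiv.Perm (Fin n), word σ = w := by
  have hlen : w.length = n := hw.length_eq.trans (length_word π)
  have hmem (i : Fin n) : 1 ≤ w[i.val] ∧ w[i.val] ≤ n :=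
    mem_word (hw.subset (List.getElem_mem _))
  let g (i : Fin n) : Fin n := ⟨w[i.val] - 1, by have := hmem i; omega⟩
  have hg : Function.Injective g := fun i j hij => by
    have h1 := hmem i
    have h2 := hmem j
    have : w[i.val] = w[j.val] := by simp only [g, Fin.mk.injEq] at hij; omega
    exact Fin.val_injective ((hw.nodup_iff.2 (nodup_word π)).getElem_inj_iff.1 this)
  refine ⟨Equiv.ofBijective g (Finite.injective_iff_bijective.1 hg),
    List.ext_getElem (by rw [length_word, hlen]) fun k hk _ => ?_⟩
  rw [length_word] at hk
  simp only [word, List.getElem_ofFn, Equiv.ofBijective_apply, g]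
  exact Nat.sub_add_cancel (hmem ⟨k, hk⟩).1

end word

/-- There is an involution on permutations of `[n]` with `pix = j` complementing `lec`
and preserving `inv - lec`. -/
theorem involution_on_pix_eq (n j : ℕ) :
    ∃ f : Equiv.Perm (Fin n) → Equiv.Perm (Fin n),
      ∀ π : Equiv.Perm (Fin n), pix π = j →
        pix (f π) = j ∧ f (f π) = π ∧
        lec (f π) = n - j - lec π ∧
        inv (f π) - lec (f π) = inv π - lec π := by
  choose f hf using fun π : Equiv.Perm (Fin n) =>
    exists_word_eq_of_perm (perm_flipHooks (nodup_word π))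
  refine ⟨f, fun π hπ => ?_⟩
  have hw := nodup_word π
  have hlec := lecL_add_lecL_flipHooks hw
  have hinv := invL_flipHooks_add_lecL hw
  rw [length_word] at hlec
  simp only [pix, lec, inv, hf] at hπ ⊢
  refine ⟨(pixL_flipHooks hw).trans hπ, word_injective ?_, by omega, by omega⟩
  rw [hf, hf, flipHooks_flipHooks hw]

end QEuler
end

section
/- For 1 < j < n, the restricted statistics are symmetric: the number of permutations π of [n] with π(j) = n and des(π) = k, counted with weight q^{ai(π)}, equals the same count with des(π) = n − 1 − k. That is, Σ_{π(j)=n, des π = k} q^{ai π} = Σ_{π(j)=n, des π = n−1−k} q^{ai π}. -/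
namespace QEuler

open Finset Polynomial

/-!
Split a word at its largest letter `M`, `w = u ++ M :: v`. Then
`des w = des u + des v + [v ≠ []]` and
`ai w = ai u + ai v + #{(a, b) ∈ u × v | b < a} + [u ≠ []] * |v|`,
so the generating polynomial `E s = ∑ t ^ des w * q ^ ai w` over the arrangements `w` of a finite
set `s` is a sum, over the set `c ⊆ s \ {M}` of letters left of `M`, of `E c * E (s \ {M} \ c)`
times a monomial. By induction on `s`, `E s` is palindromic in `t` of degree `|s| - 1`: reflection
fixes every summand with `∅ ≠ c ≠ s \ {M}` and exchanges the two remaining ones. Prescribing the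
position `j` of `M` with `1 < j < n` keeps only summands of the first kind, so the restricted
polynomial is palindromic as well.
-/

def IsAdmissibleInv (f : ℕ → ℕ) (i j : ℕ) : Prop :=
  i < j ∧ f j < f i ∧ ((0 < i ∧ f (i - 1) < f i) ∨ ∃ l ∈ Ioo i j, f i < f l)

instance (f : ℕ → ℕ) (i j : ℕ) : Decidable (IsAdmissibleInv f i j) := by
  unfold IsAdmissibleInv; infer_instance

lemma aiL_eq_sum (w : List ℕ) :
    aiL w = ∑ j ∈ range w.length, ∑ i ∈ range j,
      if IsAdmissibleInv (w.getD · 0) i j then 1 else 0 := by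
  rw [aiL, card_filter, sum_product, sum_comm]
  refine sum_congr rfl fun j hj => (sum_subset (range_subset_range.2 (mem_range.1 hj).le)
    fun i _ hij => if_neg fun h => hij (mem_range.2 h.1)).symm

namespace IsAdmissibleInv

variable {f g : ℕ → ℕ} {i j : ℕ}

lemma congr_iff (h : ∀ x ≤ j, f x = g x) : IsAdmissibleInv f i j ↔ IsAdmissibleInv g i j := by
  unfold IsAdmissibleInv
  refine and_congr_right fun hij => ?_
  rw [h i hij.le, h j le_rfl, h (i - 1) (by omega)]
  refine and_congr_right fun _ =>
    or_congr_right (exists_congr fun l => and_congr_right fun hl => ?_)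
  rw [h l (mem_Ioo.1 hl).2.le]

lemma iff_of_lt_between {l : ℕ} (hil : i < l) (hlj : l < j) (hl : f i < f l) :
    IsAdmissibleInv f i j ↔ f j < f i :=
  ⟨fun h => h.2.1, fun h => ⟨hil.trans hlj, h, .inr ⟨l, mem_Ioo.2 ⟨hil, hlj⟩, hl⟩⟩⟩

lemma iff_of_le_self (hmax : ∀ x, f x ≤ f i) :
    IsAdmissibleInv f i j ↔ i < j ∧ f j < f i ∧ 0 < i ∧ f (i - 1) < f i := by
  unfold IsAdmissibleInv
  refine and_congr_right fun _ => and_congr_right fun _ => ⟨fun h => ?_, .inl⟩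
  rcases h with h | ⟨l, -, hl⟩
  · exact h
  · exact absurd (hmax l) (not_le.2 hl)

lemma not_of_le (hmax : f i ≤ f j) : ¬ IsAdmissibleInv f i j :=
  fun h => absurd hmax (not_le.2 h.2.1)

/-- At `s = 0` the left-neighbour clause on the left-hand side reads `f (k - 1) < f k`, which lies
outside the shifted window; `hk` rules it out. -/
lemma add_iff {k s t : ℕ} (hk : 0 < k → f k ≤ f (k - 1)) :
    IsAdmissibleInv f (s + k) (t + k) ↔ IsAdmissibleInv (fun x => f (x + k)) s t := by
  unfold IsAdmissibleInv
  refine and_congr (by omega) (and_congr Iff.rfl (or_congr ?_ ⟨?_, ?_⟩))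
  · rcases s with _ | s
    · simp only [zero_add, lt_self_iff_false, false_and, iff_false, not_and, not_lt]
      exact hk
    · simp only [Nat.add_right_comm s 1 k, Nat.add_sub_cancel, Nat.zero_lt_succ, true_and,
        add_pos_iff, or_true]
  · rintro ⟨l, hl, h⟩
    obtain ⟨h1, h2⟩ := mem_Ioo.1 hl
    refine ⟨l - k, mem_Ioo.2 ⟨by omega, by omega⟩, ?_⟩
    simpa only [Nat.sub_add_cancel (by omega : k ≤ l)]
  · rintro ⟨l, hl, h⟩
    obtain ⟨h1, h2⟩ := mem_Ioo.1 hl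
    exact ⟨l + k, mem_Ioo.2 ⟨by omega, by omega⟩, h⟩

end IsAdmissibleInv

lemma getD_mem {w : List ℕ} {x : ℕ} (hx : x < w.length) : w.getD x 0 ∈ w := by
  rw [List.getD_eq_getElem _ _ hx]; exact List.getElem_mem hx

lemma getD_le {w : List ℕ} {M : ℕ} (h : ∀ a ∈ w, a ≤ M) (x : ℕ) : w.getD x 0 ≤ M := by
  rcases lt_or_ge x w.length with hx | hx
  · exact h _ (getD_mem hx)
  · rw [List.getD_eq_default _ _ hx]; exact Nat.zero_le _

lemma getD_lt {w : List ℕ} {M : ℕ} (h : ∀ a ∈ w, a < M) (hM : 0 < M) (x : ℕ) : w.getD x 0 < M := by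
  rcases lt_or_ge x w.length with hx | hx
  · exact h _ (getD_mem hx)
  · rwa [List.getD_eq_default _ _ hx]

lemma sum_range_add_one_add {β : Type*} [AddCommMonoid β] (g : ℕ → β) (p q : ℕ) :
    ∑ x ∈ range (p + 1 + q), g x = ∑ x ∈ range p, g x + g p + ∑ t ∈ range q, g (t + (p + 1)) := by
  rw [sum_range_add, sum_range_succ]; simp only [add_comm]

lemma sum_range_length_getD {β : Type*} [AddCommMonoid β] (l : List ℕ) (g : ℕ → β) :
    ∑ i ∈ range l.length, g (l.getD i 0) = (l.map g).sum := by
  rw [sum_range, ← Fin.sum_univ_fun_getElem]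
  exact sum_congr rfl fun i _ => by rw [List.getD_eq_getElem]

lemma getD_append_cons_length (u v : List ℕ) (M : ℕ) : (u ++ M :: v).getD u.length 0 = M := by
  simp

lemma getD_append_cons_add (u v : List ℕ) (M t : ℕ) :
    (u ++ M :: v).getD (t + (u.length + 1)) 0 = v.getD t 0 := by
  rw [List.getD_append_right _ _ _ _ (by omega),
    show t + (u.length + 1) - u.length = t + 1 by omega]
  rfl

lemma getD_append_cons_eq_iff {u v : List ℕ} {M p : ℕ} (hu : ∀ a ∈ u, a < M)
    (hv : ∀ a ∈ v, a < M) (hM : 0 < M) : (u ++ M :: v).getD p 0 = M ↔ u.length = p := by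
  rcases lt_trichotomy p u.length with hp | rfl | hp
  · rw [List.getD_append _ _ _ _ hp]
    exact iff_of_false (getD_lt hu hM p).ne (by omega)
  · simp
  · obtain ⟨t, rfl⟩ := Nat.exists_eq_add_of_lt hp
    rw [List.getD_append_right _ _ _ _ hp.le, show u.length + t + 1 - u.length = t + 1 by omega]
    exact iff_of_false (getD_lt hv hM t).ne (by omega)

lemma sum_isAdmissibleInv_append_max {u v : List ℕ} {M t : ℕ} (hu : ∀ a ∈ u, a < M)
    (hv : ∀ a ∈ v, a < M) (ht : t < v.length) :
    ∑ i ∈ range (t + (u.length + 1)),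
      (if IsAdmissibleInv ((u ++ M :: v).getD · 0) i (t + (u.length + 1)) then 1 else 0) =
      (u.map fun a => if v.getD t 0 < a then 1 else 0).sum + (if u = [] then 0 else 1) +
        ∑ s ∈ range t, if IsAdmissibleInv (v.getD · 0) s t then 1 else 0 := by
  set f := fun x => (u ++ M :: v).getD x 0
  have hf_left : ∀ i < u.length, f i = u.getD i 0 := fun i hi => List.getD_append _ _ _ _ hi
  have hf_mid : f u.length = M := getD_append_cons_length u v M
  have hf_right : ∀ x, f (x + (u.length + 1)) = v.getD x 0 := getD_append_cons_add u v M
  have hf_max : ∀ x, f x ≤ f u.length := fun x => hf_mid ▸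
    getD_le (fun a ha => by simp only [List.mem_append, List.mem_cons] at ha; grind) x
  have left : ∀ i < u.length,
      IsAdmissibleInv f i (t + (u.length + 1)) ↔ v.getD t 0 < u.getD i 0 := fun i hi => by
    have hfi : f i < f u.length := by rw [hf_left i hi, hf_mid]; exact hu _ (getD_mem hi)
    rw [IsAdmissibleInv.iff_of_lt_between hi (by omega) hfi, hf_left i hi, hf_right]
  have max : IsAdmissibleInv f u.length (t + (u.length + 1)) ↔ u ≠ [] := by
    rw [IsAdmissibleInv.iff_of_le_self hf_max, hf_mid, hf_right]
    refine ⟨fun h => List.ne_nil_of_length_pos h.2.2.1, fun hu0 => ?_⟩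
    have hp : 0 < u.length := List.length_pos_of_ne_nil hu0
    refine ⟨by omega, hv _ (getD_mem ht), hp, ?_⟩
    rw [hf_left _ (by omega)]
    exact hu _ (getD_mem (by omega))
  have right : ∀ s, IsAdmissibleInv f (s + (u.length + 1)) (t + (u.length + 1)) ↔
      IsAdmissibleInv (v.getD · 0) s t := fun s => by
    rw [IsAdmissibleInv.add_iff fun _ => hf_max _, funext hf_right]
  rw [show range (t + (u.length + 1)) = range (u.length + 1 + t) by rw [add_comm],
    sum_range_add_one_add, if_congr max rfl rfl, ite_not, ← sum_range_length_getD u]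
  simp only [sum_congr rfl fun i hi => if_congr (left i (mem_range.1 hi)) rfl rfl, right]

theorem aiL_append_max {u v : List ℕ} {M : ℕ} (hu : ∀ a ∈ u, a < M) (hv : ∀ a ∈ v, a < M) :
    aiL (u ++ M :: v) = aiL u + aiL v +
      (v.map fun b => (u.map fun a => if b < a then 1 else 0).sum).sum +
        if u = [] then 0 else v.length := by
  have hf_left : ∀ i < u.length, (u ++ M :: v).getD i 0 = u.getD i 0 :=
    fun i hi => List.getD_append _ _ _ _ hi
  have left : ∑ j ∈ range u.length, ∑ i ∈ range j,
      (if IsAdmissibleInv ((u ++ M :: v).getD · 0) i j then 1 else 0) = aiL u := by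
    rw [aiL_eq_sum]
    refine sum_congr rfl fun j hj => sum_congr rfl fun i _ => if_congr ?_ rfl rfl
    exact IsAdmissibleInv.congr_iff fun x hx => hf_left x (hx.trans_lt (mem_range.1 hj))
  have middle : ∑ i ∈ range u.length,
      (if IsAdmissibleInv ((u ++ M :: v).getD · 0) i u.length then 1 else 0) = 0 :=
    sum_eq_zero fun i hi => if_neg <| IsAdmissibleInv.not_of_le <| by
      rw [getD_append_cons_length, hf_left i (mem_range.1 hi)]
      exact (hu _ (getD_mem (mem_range.1 hi))).le
  rw [aiL_eq_sum, show (u ++ M :: v).length = u.length + 1 + v.length by simp; omega,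
    sum_range_add_one_add, left, middle,
    sum_congr rfl fun t ht => sum_isAdmissibleInv_append_max hu hv (mem_range.1 ht),
    sum_add_distrib, sum_add_distrib, ← aiL_eq_sum v,
    sum_range_length_getD v fun b => (u.map fun a => if b < a then 1 else 0).sum, sum_const,
    card_range, smul_eq_mul, mul_ite, mul_zero, mul_one]
  ring

lemma desL_nil : desL [] = 0 := rfl

lemma desL_singleton (a : ℕ) : desL [a] = 0 := rfl

lemma desL_cons_cons (a b : ℕ) (l : List ℕ) :
    desL (a :: b :: l) = (if b < a then 1 else 0) + desL (b :: l) := by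
  simp only [desL, descSet, List.length_cons, Nat.add_sub_cancel, List.range_succ_eq_map,
    List.filter_cons, List.filter_map]
  split_ifs <;> simp_all [Function.comp_def, add_comm]

theorem desL_append_max {u v : List ℕ} {M : ℕ} (hu : ∀ a ∈ u, a < M) (hv : ∀ a ∈ v, a < M) :
    desL (u ++ M :: v) = desL u + desL v + if v = [] then 0 else 1 := by
  induction u with
  | nil =>
    rcases v with _ | ⟨b, v⟩
    · rfl
    · rw [List.nil_append, desL_cons_cons, if_pos (hv b List.mem_cons_self),
        if_neg (List.cons_ne_nil b v), desL_nil]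
      omega
  | cons a u ih =>
    have ih := ih fun x hx => hu x (List.mem_cons_of_mem a hx)
    rcases u with _ | ⟨b, u⟩
    · rw [List.nil_append, desL_nil, zero_add] at ih
      rw [List.cons_append, List.nil_append, desL_cons_cons,
        if_neg (not_lt_of_gt (hu a List.mem_cons_self)), zero_add, ih, desL_singleton, zero_add]
    · simp only [List.cons_append, desL_cons_cons] at ih ⊢
      omega

lemma desL_le (w : List ℕ) : desL w ≤ w.length - 1 :=
  (List.length_filter_le _ _).trans_eq List.length_range

def words (s : Finset ℕ) : Finset (List ℕ) := ⟨s.val.lists, Multiset.lists_nodup_finset s⟩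

lemma mem_words {s : Finset ℕ} {w : List ℕ} : w ∈ words s ↔ (w : Multiset ℕ) = s.val := by
  simp [words, eq_comm]

lemma mem_of_mem_words {s : Finset ℕ} {w : List ℕ} (hw : w ∈ words s) {a : ℕ} (ha : a ∈ w) :
    a ∈ s := by
  rw [← mem_val, ← mem_words.1 hw]; exact ha

lemma length_eq_of_mem_words {s : Finset ℕ} {w : List ℕ} (hw : w ∈ words s) : w.length = #s := by
  rw [mem_words] at hw
  rw [← Multiset.coe_card, hw, card_val]

lemma eq_nil_iff_of_mem_words {s : Finset ℕ} {w : List ℕ} (hw : w ∈ words s) : w = [] ↔ s = ∅ := by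
  rw [← List.length_eq_zero_iff, length_eq_of_mem_words hw, card_eq_zero]

lemma card_words (s : Finset ℕ) : #(words s) = (#s).factorial := by
  change Multiset.card s.val.lists = _
  rw [← Finset.coe_toList s, Multiset.lists_coe, Multiset.coe_card, List.length_permutations,
    Finset.length_toList]

lemma words_empty : words ∅ = {[]} := by
  ext w; simp [mem_words]

lemma sum_words_insert {β : Type*} [AddCommMonoid β] {M : ℕ} {s : Finset ℕ} (hM : M ∉ s)
    (g : List ℕ → β) :
    ∑ w ∈ words (insert M s), g w =
      ∑ c ∈ s.powerset, ∑ u ∈ words c, ∑ v ∈ words (s \ c), g (u ++ M :: v) := by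
  rw [sum_congr rfl fun c _ => (sum_product' _ _ fun u v => g (u ++ M :: v)).symm, sum_sigma']
  have hval : ∀ u v : List ℕ, ((u ++ M :: v : List ℕ) : Multiset ℕ) = M ::ₘ (↑u + ↑v) := by
    intro u v; rw [← Multiset.coe_add, ← Multiset.cons_coe, Multiset.add_cons]
  symm
  refine sum_bij (fun x _ => x.2.1 ++ M :: x.2.2) ?_ ?_ ?_ (fun _ _ => rfl)
  · rintro ⟨c, u, v⟩ hx
    simp only [mem_sigma, mem_product, mem_powerset, mem_words] at hx ⊢
    obtain ⟨hc, hu, hv⟩ := hx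
    rw [insert_val_of_notMem hM, hval, hu, hv, sdiff_val, add_tsub_cancel_of_le (val_le_iff.2 hc)]
  · rintro ⟨c₁, u₁, v₁⟩ hx₁ ⟨c₂, u₂, v₂⟩ hx₂ h
    simp only [mem_sigma, mem_product, mem_powerset, mem_words] at hx₁ hx₂ h
    have hMu : M ∉ u₁ := fun h => hM (hx₁.1 (by rw [← mem_val, ← hx₁.2.1]; exact h))
    have hMv : M ∉ v₁ := fun h => hM (sdiff_subset (by rw [← mem_val, ← hx₁.2.2]; exact h))
    obtain ⟨rfl, -, rfl⟩ := (List.append_cons_inj_of_notMem hMu hMv).1 h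
    obtain rfl : c₁ = c₂ := val_inj.1 (hx₁.2.1.symm.trans hx₂.2.1)
    rfl
  · intro w hw
    rw [mem_words, insert_val_of_notMem hM] at hw
    obtain ⟨u, v, rfl⟩ := List.append_of_mem (show M ∈ w by simp [← Multiset.mem_coe, hw])
    rw [hval, Multiset.cons_inj_right] at hw
    have hle : (u : Multiset ℕ) ≤ s.val := hw ▸ Multiset.le_add_right _ _
    refine ⟨⟨⟨u, Multiset.nodup_of_le hle s.nodup⟩, u, v⟩, ?_, rfl⟩
    refine mem_sigma.2 ⟨mem_powerset.2 (val_le_iff.1 hle), mem_product.2 ⟨mem_words.2 rfl, ?_⟩⟩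
    rw [mem_words, sdiff_val]
    exact eq_tsub_of_add_eq ((add_comm _ _).trans hw)

def crossInv (c d : Finset ℕ) : ℕ := #{x ∈ c ×ˢ d | x.2 < x.1}

lemma crossInv_eq_of_mem_words {c d : Finset ℕ} {u v : List ℕ} (hu : u ∈ words c)
    (hv : v ∈ words d) :
    crossInv c d = (v.map fun b => (u.map fun a => if b < a then 1 else 0).sum).sum := by
  rw [mem_words] at hu hv
  rw [crossInv, card_filter, sum_product_right]
  simp [sum_eq_multiset_sum, ← hu, ← hv]

/-- `X` marks descents and `C X` admissible inversions. -/
noncomputable def desAiPoly (W : Finset (List ℕ)) : ℚ[X][X] := ∑ w ∈ W, C X ^ aiL w * X ^ desL w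

noncomputable def splitPoly (s c : Finset ℕ) : ℚ[X][X] :=
  C X ^ (crossInv c (s \ c) + if c = ∅ then 0 else #(s \ c)) * X ^ (if s \ c = ∅ then 0 else 1) *
    desAiPoly (words c) * desAiPoly (words (s \ c))

lemma sum_words_append_max {M : ℕ} {s c : Finset ℕ} (hM : ∀ a ∈ s, a < M) (hc : c ⊆ s) :
    ∑ u ∈ words c, ∑ v ∈ words (s \ c), C X ^ aiL (u ++ M :: v) * X ^ desL (u ++ M :: v) =
      splitPoly s c := by
  rw [splitPoly, desAiPoly, desAiPoly, mul_assoc, sum_mul_sum, mul_sum]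
  refine sum_congr rfl fun u hu => ?_
  rw [mul_sum]
  refine sum_congr rfl fun v hv => ?_
  have hu' : ∀ a ∈ u, a < M := fun a ha => hM a (hc (mem_of_mem_words hu ha))
  have hv' : ∀ a ∈ v, a < M := fun a ha => hM a (sdiff_subset (mem_of_mem_words hv ha))
  rw [aiL_append_max hu' hv', desL_append_max hu' hv', crossInv_eq_of_mem_words hu hv]
  simp only [eq_nil_iff_of_mem_words hu, eq_nil_iff_of_mem_words hv, length_eq_of_mem_words hv]
  ring

lemma desAiPoly_words_empty : desAiPoly (words ∅) = 1 := by
  rw [words_empty, desAiPoly, sum_singleton]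
  show C X ^ 0 * X ^ 0 = 1
  simp

lemma coeff_desAiPoly (W : Finset (List ℕ)) (k : ℕ) :
    (desAiPoly W).coeff k = ∑ w ∈ W with desL w = k, X ^ aiL w := by
  rw [desAiPoly, finsetSum_coeff, sum_filter]
  refine sum_congr rfl fun w _ => ?_
  rw [← C_pow, coeff_C_mul_X_pow]
  exact if_congr eq_comm rfl rfl

lemma natDegree_desAiPoly_le {W : Finset (List ℕ)} {N : ℕ} (hW : ∀ w ∈ W, w.length ≤ N + 1) :
    (desAiPoly W).natDegree ≤ N :=
  natDegree_sum_le_of_forall_le _ _ fun w hw => by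
    rw [← C_pow]
    exact (natDegree_C_mul_X_pow_le _ _).trans ((desL_le w).trans (by have := hW w hw; omega))

lemma natDegree_desAiPoly_words_le (s : Finset ℕ) : (desAiPoly (words s)).natDegree ≤ #s - 1 :=
  natDegree_desAiPoly_le fun w hw => by rw [length_eq_of_mem_words hw]; omega

lemma desAiPoly_words_insert {M : ℕ} {s : Finset ℕ} (hM : ∀ a ∈ s, a < M) :
    desAiPoly (words (insert M s)) = ∑ c ∈ s.powerset, splitPoly s c := by
  rw [desAiPoly, sum_words_insert fun h => lt_irrefl M (hM M h)]
  exact sum_congr rfl fun c hc => sum_words_append_max hM (mem_powerset.1 hc)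

lemma desAiPoly_words_insert_filter {M : ℕ} {s : Finset ℕ} (hM : ∀ a ∈ s, a < M) (hM0 : 0 < M)
    (p : ℕ) : desAiPoly ({w ∈ words (insert M s) | w.getD p 0 = M}) =
      ∑ c ∈ s.powersetCard p, splitPoly s c := by
  rw [desAiPoly, sum_filter, sum_words_insert fun h => lt_irrefl M (hM M h),
    powersetCard_eq_filter, sum_filter]
  refine sum_congr rfl fun c hc => ?_
  have hc := mem_powerset.1 hc
  have key : ∀ u ∈ words c, ∀ v ∈ words (s \ c), (u ++ M :: v).getD p 0 = M ↔ #c = p := by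
    intro u hu v hv
    rw [getD_append_cons_eq_iff (fun a ha => hM a (hc (mem_of_mem_words hu ha)))
      (fun a ha => hM a (sdiff_subset (mem_of_mem_words hv ha))) hM0, length_eq_of_mem_words hu]
  rw [sum_congr rfl fun u hu => sum_congr rfl fun v hv => if_congr (key u hu v hv) rfl rfl,
    ← sum_words_append_max hM hc]
  split_ifs <;> simp

lemma reflect_sum {R ι : Type*} [Semiring R] (s : Finset ι) (f : ι → R[X]) (N : ℕ) :
    reflect N (∑ i ∈ s, f i) = ∑ i ∈ s, reflect N (f i) :=
  map_sum (⟨⟨reflect N, reflect_zero⟩, fun f g => reflect_add f g N⟩ : R[X] →+ R[X]) f s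

lemma reflect_add_one_of_reflect {R : Type*} [Semiring R] {p : R[X]} {N : ℕ}
    (hp : p.natDegree ≤ N) (h : reflect N p = p) : reflect (N + 1) p = X * p := by
  conv_lhs => rw [add_comm, ← one_mul p]
  rw [reflect_mul (F := 1) _ _ (by simp) hp, reflect_one, pow_one, h]

lemma reflect_add_one_X_mul_of_reflect {R : Type*} [Semiring R] {p : R[X]} {N : ℕ}
    (hp : p.natDegree ≤ N) (h : reflect N p = p) : reflect (N + 1) (X * p) = p := by
  rw [add_comm, reflect_mul _ _ natDegree_X_le hp, reflect_one_X, h, one_mul]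

lemma splitPoly_empty (s : Finset ℕ) :
    splitPoly s ∅ = X ^ (if s = ∅ then 0 else 1) * desAiPoly (words s) := by
  simp [splitPoly, crossInv, desAiPoly_words_empty]

lemma splitPoly_self (s : Finset ℕ) : splitPoly s s = desAiPoly (words s) := by
  simp [splitPoly, crossInv, desAiPoly_words_empty]

lemma reflect_splitPoly {s c : Finset ℕ} (hc : c ⊆ s)
    (hsym : ∀ t ⊆ s, reflect (#t - 1) (desAiPoly (words t)) = desAiPoly (words t)) :
    reflect #s (splitPoly s c) = splitPoly s (Equiv.swap ∅ s c) := by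
  have hdeg := natDegree_desAiPoly_words_le
  have hcard : ∀ t : Finset ℕ, t ≠ ∅ → #t = #t - 1 + 1 := fun t ht =>
    (Nat.sub_add_cancel (card_pos.2 (nonempty_iff_ne_empty.2 ht))).symm
  rcases eq_or_ne c ∅ with rfl | hc0
  · rw [Equiv.swap_apply_left, splitPoly_empty, splitPoly_self]
    rcases eq_or_ne s ∅ with rfl | hs0
    · simp [desAiPoly_words_empty]
    rw [if_neg hs0, pow_one, hcard s hs0,
      reflect_add_one_X_mul_of_reflect (hdeg s) (hsym s subset_rfl)]
  rcases eq_or_ne c s with rfl | hcs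
  · rw [Equiv.swap_apply_right, splitPoly_empty, splitPoly_self, if_neg hc0, pow_one, hcard c hc0,
      reflect_add_one_of_reflect (hdeg c) (hsym c subset_rfl)]
  rw [Equiv.swap_apply_of_ne_of_ne hc0 hcs]
  have hd0 : s \ c ≠ ∅ := sdiff_eq_empty_iff_subset.not.2 fun h => hcs (hc.antisymm h)
  have hs : #s = 2 + (#c - 1) + (#(s \ c) - 1) := by
    have := card_sdiff_add_card_eq_card hc
    have := hcard c hc0
    have := hcard _ hd0
    omega
  simp only [splitPoly, hc0, hd0, if_false]
  rw [hs, ← C_pow, reflect_mul _ _ ?_ (hdeg _), reflect_mul _ _ ?_ (hdeg _), reflect_C_mul_X_pow,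
    hsym c hc, hsym _ sdiff_subset]
  · rfl
  · exact (natDegree_C_mul_X_pow_le _ _).trans (by omega)
  · exact natDegree_mul_le.trans
      (add_le_add ((natDegree_C_mul_X_pow_le _ _).trans (by omega)) (hdeg c))

theorem reflect_desAiPoly_words (s : Finset ℕ) :
    reflect (#s - 1) (desAiPoly (words s)) = desAiPoly (words s) := by
  induction s using Finset.strongInduction with
  | H s ih =>
  rcases s.eq_empty_or_nonempty with rfl | hs
  · simp [desAiPoly_words_empty]
  set M := s.max' hs
  have hlt : ∀ a ∈ s.erase M, a < M := fun a ha =>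
    lt_of_le_of_ne (s.le_max' a (mem_of_mem_erase ha)) (ne_of_mem_erase ha)
  rw [← insert_erase (s.max'_mem hs)] at ih ⊢
  rw [card_insert_of_notMem (notMem_erase M s), Nat.add_sub_cancel, desAiPoly_words_insert hlt,
    reflect_sum]
  refine sum_equiv (Equiv.swap ∅ (s.erase M)) (fun c => ?_) fun c hc =>
    reflect_splitPoly (mem_powerset.1 hc) fun t ht =>
      ih t (ht.trans_ssubset (ssubset_insert (notMem_erase M s)))
  rw [Equiv.swap_apply_def]
  split_ifs <;> simp_all

lemma X_dvd_splitPoly {s c : Finset ℕ} (hc : c ⊆ s) (hcs : c ≠ s) : X ∣ splitPoly s c := by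
  have hd0 : s \ c ≠ ∅ := sdiff_eq_empty_iff_subset.not.2 fun h => hcs (hc.antisymm h)
  rw [splitPoly, if_neg hd0, pow_one, mul_assoc, mul_assoc]
  exact dvd_mul_of_dvd_right (dvd_mul_right _ _) _

theorem reflect_desAiPoly_filter_getD {M p : ℕ} {s : Finset ℕ} (hM : ∀ a ∈ s, a < M) (hM0 : 0 < M)
    (hp0 : 0 < p) (hps : p < #s) :
    reflect #s (desAiPoly {w ∈ words (insert M s) | w.getD p 0 = M}) =
      desAiPoly {w ∈ words (insert M s) | w.getD p 0 = M} := by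
  rw [desAiPoly_words_insert_filter hM hM0, reflect_sum]
  refine sum_congr rfl fun c hc => ?_
  obtain ⟨hcs, rfl⟩ := mem_powersetCard.1 hc
  rw [reflect_splitPoly hcs fun t _ => reflect_desAiPoly_words t,
    Equiv.swap_apply_of_ne_of_ne (by rintro rfl; simp at hp0) (by rintro rfl; simp at hps)]

lemma X_dvd_desAiPoly_filter_getD {M p : ℕ} {s : Finset ℕ} (hM : ∀ a ∈ s, a < M) (hM0 : 0 < M)
    (hps : p < #s) : X ∣ desAiPoly {w ∈ words (insert M s) | w.getD p 0 = M} := by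
  rw [desAiPoly_words_insert_filter hM hM0]
  refine dvd_sum fun c hc => ?_
  obtain ⟨hcs, rfl⟩ := mem_powersetCard.1 hc
  exact X_dvd_splitPoly hcs (by rintro rfl; simp at hps)

lemma word_injective_s16 (n : ℕ) : Function.Injective (word : Equiv.Perm (Fin n) → List ℕ) := by
  intro π σ h
  refine Equiv.ext fun i => Fin.ext ?_
  simpa using congrFun (List.ofFn_injective h) i

lemma word_mem_words {n : ℕ} (π : Equiv.Perm (Fin n)) : word π ∈ words (Icc 1 n) := by
  have hnodup : (word π).Nodup :=
    List.nodup_ofFn.2 fun i j h => π.injective (Fin.ext (by simpa using h))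
  rw [mem_words, Multiset.Nodup.ext (Multiset.coe_nodup.2 hnodup) (Icc 1 n).nodup]
  intro a
  simp only [Multiset.mem_coe, word, List.mem_ofFn, mem_val, mem_Icc]
  constructor
  · rintro ⟨i, rfl⟩
    exact ⟨by omega, (π i).isLt⟩
  · rintro ⟨h1, h2⟩
    exact ⟨π.symm ⟨a - 1, by omega⟩, by rw [Equiv.apply_symm_apply, Fin.val_mk]; omega⟩

lemma image_word_univ (n : ℕ) :
    (univ : Finset (Equiv.Perm (Fin n))).image word = words (Icc 1 n) := by
  refine eq_of_subset_of_card_le (image_subset_iff.2 fun π _ => word_mem_words π) ?_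
  rw [card_words, Nat.card_Icc, card_image_of_injective _ (word_injective_s16 n), card_univ,
    Fintype.card_perm, Fintype.card_fin, Nat.add_sub_cancel]

lemma sum_filter_word {β : Type*} [AddCommMonoid β] (n : ℕ) (P : List ℕ → Prop) [DecidablePred P]
    (g : List ℕ → β) :
    ∑ π : Equiv.Perm (Fin n) with P (word π), g (word π) = ∑ w ∈ words (Icc 1 n) with P w, g w := by
  rw [← image_word_univ, filter_image, sum_image (word_injective_s16 n).injOn]

/-- Symmetry of the restricted statistics: for `1 < j < n`, the `ai`-generating function of
permutations with `π(j) = n` and `des = k` equals that with `des = n - 1 - k`. -/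
theorem restricted_qEulerian_symmetric (n j k : ℕ) (h1 : 1 < j) (h2 : j < n) :
    ∑ π ∈ Finset.univ.filter
        (fun π : Equiv.Perm (Fin n) => (word π).getD (j-1) 0 = n ∧ des π = k),
      (Polynomial.X : Polynomial ℚ) ^ ai π =
    ∑ π ∈ Finset.univ.filter
        (fun π : Equiv.Perm (Fin n) => (word π).getD (j-1) 0 = n ∧ des π = n - 1 - k),
      (Polynomial.X : Polynomial ℚ) ^ ai π := by
  have hIcc : Icc 1 n = insert n (Icc 1 (n - 1)) := by
    obtain ⟨m, rfl⟩ : ∃ m, n = m + 1 := ⟨n - 1, by omega⟩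
    rw [Nat.add_sub_cancel]
    exact (insert_Icc_right_eq_Icc_add_one (by omega)).symm
  have hlt : ∀ a ∈ Icc 1 (n - 1), a < n := fun a ha => by rw [mem_Icc] at ha; omega
  have hj : j - 1 < #(Icc 1 (n - 1)) := by rw [Nat.card_Icc]; omega
  have hR := reflect_desAiPoly_filter_getD (p := j - 1) hlt (by omega) (by omega) hj
  have hX := X_dvd_desAiPoly_filter_getD (p := j - 1) hlt (by omega) hj
  rw [← hIcc, Nat.card_Icc, Nat.add_sub_cancel] at hR
  rw [← hIcc] at hX
  set R := desAiPoly ({w ∈ words (Icc 1 n) | w.getD (j - 1) 0 = n})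
  have hcoeff : ∀ K, ∑ π : Equiv.Perm (Fin n) with (word π).getD (j - 1) 0 = n ∧ des π = K,
      (X : ℚ[X]) ^ ai π = R.coeff K := fun K => by
    rw [coeff_desAiPoly, filter_filter]
    exact sum_filter_word n (fun w => w.getD (j - 1) 0 = n ∧ desL w = K) (fun w => X ^ aiL w)
  have hdeg : R.natDegree ≤ n - 1 := natDegree_desAiPoly_le fun w hw => by
    rw [length_eq_of_mem_words (mem_filter.1 hw).1, Nat.card_Icc]; omega
  rw [hcoeff, hcoeff]
  rcases le_or_gt k (n - 1) with hk | hk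
  -- for `k > n - 1` the right-hand side is the truncated `des π = 0`; both coefficients vanish
  · conv_lhs => rw [← hR, coeff_reflect, revAt_le hk]
  · rw [Nat.sub_eq_zero_of_le hk.le, coeff_eq_zero_of_natDegree_lt (hdeg.trans_lt hk),
      ← X_dvd_iff.1 hX]

end QEuler
end
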